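/- arXiv:1011.0941 — 2 statements merged into one kernel-verified Lean document; each statement's English description precedes it below -/
import Mathlib

section
/- Let n, h, k be integers with k ≥ 1, h ≥ 0, n ≡ h (mod 2), and set s = min(k−1, h). Then the total number of k-down steps, summed over all generalized Dyck paths from (0,0) to (n,h), equals the sum over j = 0, 1, …, s of the number of generalized Dyck paths from (0,0) to (n, 2k−2j+h). (In other words, the set of pairs (D, i), where D is a generalized Dyck path from (0,0) to (n,h) and i is the position of a k-down step of D, is in bijection with the disjoint union over j = 0, …, s of the sets of generalized Dyck paths from (0,0) to (n, 2k−2j+h).) -/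
/-! Removing the last step gives recursions in `n` for both sides. A path ending at height
`h ≥ 0` extends one ending at `h - 1` or `h + 1`, and its last step is a `k`-down step exactly
when it goes down from `h + 1 = k`; so with `N(n, m) = #(gdPaths n m)` and `D(n, h)` the total
number of `k`-down steps, `N(n+1, m) = N(n, m-1) + N(n, m+1)` and
`D(n+1, h) = D(n, h-1) + D(n, h+1) + [h + 1 = k] N(n, k)`. The right-hand side
`∑_{j < min k (h+1)} N(n, 2k + h - 2j)` satisfies the same recursion: after expanding each
`N(n+1, ·)`, the two shifted windows of summation agree with those for `h - 1` and `h + 1`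
up to boundary terms, which cancel except for `N(n, k)` when `h + 1 = k`. -/

open Finset

attribute [local instance] Classical.propDecidable

/-- The height of the lattice path `p` (where `true` is a northeast step `(1,1)` and
`false` is a southeast step `(1,-1)`) after its first `i` steps. -/
def pathHeight {n : ℕ} (p : Fin n → Bool) (i : ℕ) : ℤ :=
  ∑ j ∈ Finset.univ.filter (fun j : Fin n => (j : ℕ) < i), (if p j then (1 : ℤ) else -1)

/-- `p` is a generalized Dyck path from `(0,0)` to `(n,h)`: it ends at height `h`
and never goes below the x-axis. -/
def IsGDPath {n : ℕ} (h : ℤ) (p : Fin n → Bool) : Prop :=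
  pathHeight p n = h ∧ ∀ i ≤ n, 0 ≤ pathHeight p i

/-- The set of generalized Dyck paths from `(0,0)` to `(n,h)`. -/
noncomputable def gdPaths (n : ℕ) (h : ℤ) : Finset (Fin n → Bool) :=
  Finset.univ.filter (IsGDPath h)

/-- The number of `k`-down steps of `p`, i.e. southeast steps from height `k` to `k-1`. -/
noncomputable def downSteps {n : ℕ} (k : ℤ) (p : Fin n → Bool) : ℕ :=
  (Finset.univ.filter (fun i : Fin n => p i = false ∧ pathHeight p (i : ℕ) = k)).card

/-- Binomial coefficient on integers, `0` unless `0 ≤ b ≤ a`. -/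
def binom (a b : ℤ) : ℤ :=
  if 0 ≤ b ∧ b ≤ a then (a.toNat.choose b.toNat : ℤ) else 0

lemma pathHeight_eq_sum_ite {n : ℕ} (p : Fin n → Bool) (i : ℕ) :
    pathHeight p i = ∑ j : Fin n, if (j : ℕ) < i then (if p j then (1 : ℤ) else -1) else 0 :=
  sum_filter _ _

lemma pathHeight_of_le {n : ℕ} (p : Fin n → Bool) {i : ℕ} (hi : n ≤ i) :
    pathHeight p i = pathHeight p n := by
  simp only [pathHeight_eq_sum_ite]
  exact sum_congr rfl fun j _ => by simp [j.isLt, j.isLt.trans_le hi]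

lemma pathHeight_snoc {n : ℕ} (q : Fin n → Bool) (b : Bool) (i : ℕ) :
    pathHeight (Fin.snoc q b) i = pathHeight q i + if n < i then (if b then 1 else -1) else 0 := by
  simp [pathHeight_eq_sum_ite, Fin.sum_univ_castSucc]

lemma pathHeight_snoc_of_le {n : ℕ} (q : Fin n → Bool) (b : Bool) {i : ℕ} (hi : i ≤ n) :
    pathHeight (Fin.snoc q b) i = pathHeight q i := by
  simp [pathHeight_snoc, hi.not_gt]

lemma pathHeight_snoc_succ {n : ℕ} (q : Fin n → Bool) (b : Bool) :
    pathHeight (Fin.snoc q b) (n + 1) = pathHeight q n + if b then 1 else -1 := by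
  simp [pathHeight_snoc, pathHeight_of_le q n.le_succ]

lemma isGDPath_snoc_iff {n : ℕ} (q : Fin n → Bool) (b : Bool) (H : ℤ) :
    IsGDPath H (Fin.snoc q b) ↔ IsGDPath (H - if b then 1 else -1) q ∧ 0 ≤ H := by
  have hend := pathHeight_snoc_succ q b
  constructor
  · rintro ⟨hH, hpos⟩
    refine ⟨⟨by omega, fun i hi => ?_⟩, hH ▸ hpos (n + 1) le_rfl⟩
    simpa [pathHeight_snoc_of_le q b hi] using hpos i (by omega)
  · rintro ⟨⟨hq, hpos⟩, hH⟩
    refine ⟨by omega, fun i hi => ?_⟩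
    rcases hi.lt_or_eq with hi | rfl
    · simpa [pathHeight_snoc_of_le q b (Nat.le_of_lt_succ hi)] using hpos i (by omega)
    · omega

lemma downSteps_snoc {n : ℕ} (k : ℤ) (q : Fin n → Bool) (b : Bool) :
    downSteps k (Fin.snoc q b) =
      downSteps k q + if b = false ∧ pathHeight q n = k then 1 else 0 := by
  simp only [downSteps, card_filter, Fin.sum_univ_castSucc, Fin.snoc_castSucc, Fin.snoc_last,
    Fin.val_castSucc, Fin.val_last, pathHeight_snoc_of_le q b (Fin.is_le _)]

lemma sum_gdPaths_succ {M : Type*} [AddCommMonoid M] {n : ℕ} {H : ℤ} (hH : 0 ≤ H)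
    (g : (Fin (n + 1) → Bool) → M) :
    ∑ p ∈ gdPaths (n + 1) H, g p =
      ∑ q ∈ gdPaths n (H - 1), g (Fin.snoc q true) +
        ∑ q ∈ gdPaths n (H + 1), g (Fin.snoc q false) := by
  simp only [gdPaths, sum_filter]
  rw [← (Fin.snocEquiv fun _ => Bool).sum_comp, Fintype.sum_prod_type, Fintype.sum_bool]
  simp [Fin.snocEquiv, isGDPath_snoc_iff, hH]

lemma gdPaths_of_neg (n : ℕ) {H : ℤ} (hH : H < 0) : gdPaths n H = ∅ :=
  filter_false_of_mem fun _ _ hp => (hp.2 n le_rfl).not_gt (hp.1 ▸ hH)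

lemma gdPaths_zero_of_ne {H : ℤ} (hH : H ≠ 0) : gdPaths 0 H = ∅ :=
  filter_false_of_mem fun p _ hp => hH (hp.1 ▸ by simp [pathHeight])

lemma card_gdPaths_succ {n : ℕ} {H : ℤ} (hH : 0 ≤ H) :
    #(gdPaths (n + 1) H) = #(gdPaths n (H - 1)) + #(gdPaths n (H + 1)) := by
  simpa only [card_eq_sum_ones] using sum_gdPaths_succ hH fun _ => 1

noncomputable def totalDownSteps (n : ℕ) (H k : ℤ) : ℕ :=
  ∑ p ∈ gdPaths n H, downSteps k p

lemma totalDownSteps_succ {n : ℕ} {H : ℤ} (k : ℤ) (hH : 0 ≤ H) :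
    totalDownSteps (n + 1) H k =
      totalDownSteps n (H - 1) k + totalDownSteps n (H + 1) k +
        if H + 1 = k then #(gdPaths n (H + 1)) else 0 := by
  have hdown : ∀ q ∈ gdPaths n (H + 1),
      downSteps k (Fin.snoc q false) = downSteps k q + if H + 1 = k then 1 else 0 := by
    intro q hq
    simp [downSteps_snoc, (mem_filter.1 hq).2.1]
  rw [totalDownSteps, sum_gdPaths_succ hH, sum_congr rfl hdown, sum_add_distrib, add_assoc]
  by_cases hk : H + 1 = k <;> simp [hk, downSteps_snoc, totalDownSteps]

lemma sum_range_min_neighbours {M : Type*} [AddCommMonoid M] (F : ℤ → M) (A : ℤ) (k c : ℕ) :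
    ∑ j ∈ range (min k (c + 1)), (F (A - 2 * j - 1) + F (A - 2 * j + 1)) =
      ∑ j ∈ range (min k c), F (A - 2 * j - 1) + ∑ j ∈ range (min k (c + 2)), F (A - 2 * j + 1) +
        if c + 1 = k then F (A - 2 * c - 1) else 0 := by
  rw [sum_add_distrib]
  rcases lt_trichotomy (c + 1) k with hlt | rfl | hgt
  · have hc : A - 2 * ((c + 1 : ℕ) : ℤ) + 1 = A - 2 * c - 1 := by push_cast; ring
    rw [show min k c = c by omega, show min k (c + 1) = c + 1 by omega,
      show min k (c + 2) = c + 2 by omega, if_neg hlt.ne, sum_range_succ _ c,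
      sum_range_succ _ (c + 1), hc]
    abel
  · rw [show min (c + 1) c = c by omega, show min (c + 1) (c + 1) = c + 1 by omega,
      show min (c + 1) (c + 2) = c + 1 by omega, if_pos rfl, sum_range_succ _ c]
    abel
  · rw [show min k c = k by omega, show min k (c + 1) = k by omega,
      show min k (c + 2) = k by omega, if_neg hgt.ne', add_zero]

theorem totalDownSteps_eq_sum_card (k n h : ℕ) :
    totalDownSteps n h k = ∑ j ∈ range (min k (h + 1)), #(gdPaths n (2 * k + h - 2 * j)) := by
  induction n generalizing h with
  | zero =>
    refine (sum_eq_zero fun p _ => ?_).trans (sum_eq_zero fun j hj => ?_).symm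
    · simp [downSteps]
    · rw [gdPaths_zero_of_ne (by have := mem_range.1 hj; omega), card_empty]
  | succ n ih =>
    have below : totalDownSteps n (h - 1) k =
        ∑ j ∈ range (min k h), #(gdPaths n (2 * k + h - 2 * j - 1)) := by
      rcases h with _ | h
      · simp [totalDownSteps, gdPaths_of_neg]
      · simp only [Nat.cast_add_one, add_sub_cancel_right, ih]
        exact sum_congr rfl fun j _ => by ring_nf
    have above : totalDownSteps n (h + 1) k =
        ∑ j ∈ range (min k (h + 2)), #(gdPaths n (2 * k + h - 2 * j + 1)) := by
      rw [← Nat.cast_add_one, ih]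
      exact sum_congr rfl fun j _ => by push_cast; ring_nf
    have peak : (if (h : ℤ) + 1 = k then #(gdPaths n (h + 1)) else 0) =
        if h + 1 = k then #(gdPaths n (2 * k + h - 2 * h - 1)) else 0 := by
      simp only [← Nat.cast_add_one, Nat.cast_inj]
      split_ifs with hk
      · congr 2; omega
      · rfl
    rw [totalDownSteps_succ _ h.cast_nonneg, below, above, peak]
    refine (sum_range_min_neighbours (fun H => #(gdPaths n H)) (2 * k + h) k h).symm.trans
      (sum_congr rfl fun j hj => (card_gdPaths_succ ?_).symm)
    have := mem_range.1 hj
    omega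

theorem stmt2_general (n h k : ℕ) (hk : 1 ≤ k) :
    (∑ p ∈ gdPaths n (h : ℤ), downSteps (k : ℤ) p) =
      ∑ j ∈ Finset.range (min (k - 1) h + 1),
        (gdPaths n (2 * (k : ℤ) - 2 * (j : ℤ) + (h : ℤ))).card := by
  rw [show min (k - 1) h + 1 = min k (h + 1) by omega]
  refine (totalDownSteps_eq_sum_card k n h).trans (sum_congr rfl fun j _ => ?_)
  rw [add_sub_right_comm]

/-- The total number of k-down steps over all generalized Dyck paths from (0,0) to (n,h)
equals the sum over j = 0,…,s of the number of generalized Dyck paths from (0,0) to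
(n, 2k−2j+h), where s = min(k−1,h). -/
theorem stmt2 (n h k : ℕ) (hk : 1 ≤ k) (hmod : n % 2 = h % 2) :
    (∑ p ∈ gdPaths n (h : ℤ), downSteps (k : ℤ) p) =
      ∑ j ∈ Finset.range (min (k - 1) h + 1),
        (gdPaths n (2 * (k : ℤ) - 2 * (j : ℤ) + (h : ℤ))).card :=
  stmt2_general n h k hk
end

section
/- For all integers h ≥ 0 and n ≥ 0, the number of generalized Dyck paths from (0,0) to (n,h) equals the number of (h+1)-tuples (p₀, p₁, …, p_h) of Dyck paths whose lengths sum to n − h (both quantities being 0 when n < h or n ≢ h (mod 2)). -/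
/-!
Cut a path from `(0,0)` to `(n, h + 1)` at its last visit to the x-axis, at time `m`: before it
is a Dyck path of length `m`, then comes an up step, and the rest, shifted down by one, is a
generalized Dyck path from `(0,0)` to `(n - m - 1, h)`. Hence the number `g(n, h)` of such paths
satisfies `g(n, h + 1) = ∑_{m < n} g(m, 0) g(n - m - 1, h)`. Splitting off the first entry of a
tuple shows that the tuple counts satisfy the same recursion, and for `h = 0` both sides are
`g(n, 0)`.
-/

open Finset

attribute [local instance] Classical.propDecidable

/-- The `j`-th step of `p` as `±1`; `0` past the end of the path. -/
def pathStep {n : ℕ} (p : Fin n → Bool) (j : ℕ) : ℤ :=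
  if h : j < n then (if p ⟨j, h⟩ then 1 else -1) else 0

lemma pathStep_of_le {n : ℕ} (p : Fin n → Bool) {j : ℕ} (hj : n ≤ j) :
    pathStep p j = 0 := by
  simp [pathStep, Nat.not_lt.mpr hj]

lemma pathHeight_eq_sum_range {n : ℕ} (p : Fin n → Bool) (i : ℕ) :
    pathHeight p i = ∑ j ∈ range i, pathStep p j := by
  have hterm (j : Fin n) : (if (j : ℕ) < i then (if p j then (1 : ℤ) else -1) else 0) =
      if (j : ℕ) < i then pathStep p j else 0 := by
    simp [pathStep, j.isLt]
  rw [pathHeight, sum_filter, sum_congr rfl fun j _ => hterm j,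
    Fin.sum_univ_eq_sum_range (fun j => if j < i then pathStep p j else 0), ← sum_filter]
  refine sum_subset_zero_on_sdiff (fun j hj => mem_range.mpr (mem_filter.mp hj).2)
    (fun j hj => ?_) fun _ _ => rfl
  simp only [mem_sdiff, mem_filter, mem_range] at hj
  exact pathStep_of_le p (by omega)

@[simp]
lemma pathHeight_zero {n : ℕ} (p : Fin n → Bool) : pathHeight p 0 = 0 := by
  simp [pathHeight_eq_sum_range]

lemma pathHeight_succ {n : ℕ} (p : Fin n → Bool) (i : ℕ) :
    pathHeight p (i + 1) = pathHeight p i + pathStep p i := by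
  rw [pathHeight_eq_sum_range, pathHeight_eq_sum_range, sum_range_succ]

lemma pathHeight_eq_of_pathStep_eq {m n : ℕ} {p : Fin m → Bool} {q : Fin n → Bool} {i : ℕ}
    (h : ∀ j < i, pathStep p j = pathStep q j) : pathHeight p i = pathHeight q i := by
  simp only [pathHeight_eq_sum_range]
  exact sum_congr rfl fun j hj => h j (mem_range.mp hj)

/-- The first `m` steps of `p`, padded with up steps if `n < m`. -/
def pathPrefix {n : ℕ} (p : Fin n → Bool) (m : ℕ) : Fin m → Bool :=
  fun i => if h : (i : ℕ) < n then p ⟨i, h⟩ else true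

def pathSuffix {n : ℕ} (p : Fin n → Bool) (d : ℕ) : Fin (n - d) → Bool :=
  fun i => p ⟨d + i, by omega⟩

lemma pathHeight_pathPrefix {n m i : ℕ} (p : Fin n → Bool) (hm : m ≤ n) (hi : i ≤ m) :
    pathHeight (pathPrefix p m) i = pathHeight p i :=
  pathHeight_eq_of_pathStep_eq fun j hj => by
    simp [pathStep, pathPrefix, show j < m by omega, show j < n by omega]

lemma pathHeight_add_pathSuffix {n : ℕ} (p : Fin n → Bool) (d i : ℕ) :
    pathHeight p (d + i) = pathHeight p d + pathHeight (pathSuffix p d) i := by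
  have hstep : ∀ j, pathStep (pathSuffix p d) j = pathStep p (d + j) := by
    intro j
    by_cases hj : j < n - d
    · simp [pathStep, pathSuffix, hj, show d + j < n by omega]
      rfl
    · rw [pathStep_of_le _ (by omega), pathStep_of_le _ (by omega)]
  simp only [pathHeight_eq_sum_range, sum_range_add, hstep]

/-- `p`, an up step, then `q`; the lengths add up to `n` only when `m < n`. -/
def glue (m n : ℕ) (p : Fin m → Bool) (q : Fin (n - (m + 1)) → Bool) : Fin n → Bool :=
  fun i => if h₁ : (i : ℕ) < m then p ⟨i, h₁⟩
    else if h₂ : m < (i : ℕ) then q ⟨i - (m + 1), by omega⟩ else true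

lemma pathPrefix_glue {m n : ℕ} (hmn : m < n) (p : Fin m → Bool)
    (q : Fin (n - (m + 1)) → Bool) :
    pathPrefix (glue m n p q) m = p := by
  funext i
  simp [pathPrefix, glue, show (i : ℕ) < n by omega]

lemma pathSuffix_glue {m n : ℕ} (p : Fin m → Bool) (q : Fin (n - (m + 1)) → Bool) :
    pathSuffix (glue m n p q) (m + 1) = q := by
  funext i
  simp [pathSuffix, glue, show ¬ m + 1 + (i : ℕ) < m by omega,
    show m < m + 1 + (i : ℕ) by omega]

lemma glue_pathPrefix_pathSuffix {m n : ℕ} (r : Fin n → Bool) (hmn : m < n)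
    (hr : r ⟨m, hmn⟩ = true) : glue m n (pathPrefix r m) (pathSuffix r (m + 1)) = r := by
  funext i
  rcases lt_trichotomy (i : ℕ) m with hi | hi | hi
  · simp [glue, pathPrefix, hi, i.isLt]
  · obtain rfl : i = ⟨m, hmn⟩ := Fin.ext hi
    simp [glue, hr]
  · simp only [glue, pathSuffix, show ¬ (i : ℕ) < m by omega, hi, dite_false, dite_true]
    congr 1
    ext
    simp only
    omega

lemma pathHeight_glue_of_le {m n i : ℕ} (hmn : m < n) (p : Fin m → Bool)
    (q : Fin (n - (m + 1)) → Bool) (hi : i ≤ m) :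
    pathHeight (glue m n p q) i = pathHeight p i := by
  rw [← pathHeight_pathPrefix _ hmn.le hi, pathPrefix_glue hmn]

lemma pathHeight_glue_add {m n : ℕ} (hmn : m < n) (p : Fin m → Bool)
    (q : Fin (n - (m + 1)) → Bool) (i : ℕ) :
    pathHeight (glue m n p q) (m + 1 + i) = pathHeight p m + 1 + pathHeight q i := by
  rw [pathHeight_add_pathSuffix, pathSuffix_glue, pathHeight_succ,
    pathHeight_glue_of_le hmn p q le_rfl]
  simp [pathStep, hmn, glue]

lemma mem_gdPaths {n : ℕ} {h : ℤ} {p : Fin n → Bool} :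
    p ∈ gdPaths n h ↔ pathHeight p n = h ∧ ∀ i ≤ n, 0 ≤ pathHeight p i := by
  simp [gdPaths, IsGDPath]

lemma glue_mem_gdPaths {m n : ℕ} (hmn : m < n) {h : ℤ} {p : Fin m → Bool}
    {q : Fin (n - (m + 1)) → Bool} (hp : p ∈ gdPaths m 0) (hq : q ∈ gdPaths (n - (m + 1)) h) :
    glue m n p q ∈ gdPaths n (h + 1) := by
  rw [mem_gdPaths] at hp hq ⊢
  refine ⟨?_, fun i hi => ?_⟩
  · have := pathHeight_glue_add hmn p q (n - (m + 1))
    rw [show m + 1 + (n - (m + 1)) = n by omega, hp.1, hq.1] at this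
    rw [this, zero_add, add_comm]
  · rcases le_or_gt i m with him | him
    · rw [pathHeight_glue_of_le hmn p q him]
      exact hp.2 i him
    · obtain ⟨k, rfl⟩ : ∃ k, i = m + 1 + k := ⟨i - (m + 1), by omega⟩
      rw [pathHeight_glue_add hmn, hp.1]
      linarith [hq.2 k (by omega)]

noncomputable def lastZero {n : ℕ} (r : Fin n → Bool) : ℕ :=
  Nat.findGreatest (fun i => pathHeight r i = 0) n

lemma lastZero_le {n : ℕ} (r : Fin n → Bool) : lastZero r ≤ n :=
  Nat.findGreatest_le n

lemma pathHeight_lastZero {n : ℕ} (r : Fin n → Bool) : pathHeight r (lastZero r) = 0 :=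
  Nat.findGreatest_spec (P := fun i => pathHeight r i = 0) (Nat.zero_le n) (pathHeight_zero r)

lemma pathHeight_ne_zero_of_lastZero_lt {n i : ℕ} {r : Fin n → Bool} (hi : lastZero r < i)
    (hin : i ≤ n) : pathHeight r i ≠ 0 :=
  Nat.findGreatest_is_greatest hi hin

lemma lastZero_glue {m n : ℕ} (hmn : m < n) {h : ℤ} {p : Fin m → Bool}
    {q : Fin (n - (m + 1)) → Bool} (hp : p ∈ gdPaths m 0) (hq : q ∈ gdPaths (n - (m + 1)) h) :
    lastZero (glue m n p q) = m := by
  rw [mem_gdPaths] at hp hq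
  refine Nat.findGreatest_eq_iff.mpr ⟨hmn.le, fun _ => ?_, fun i hmi hin => ?_⟩
  · rw [pathHeight_glue_of_le hmn p q le_rfl, hp.1]
  · obtain ⟨k, rfl⟩ : ∃ k, i = m + 1 + k := ⟨i - (m + 1), by omega⟩
    rw [pathHeight_glue_add hmn, hp.1]
    linarith [hq.2 k (by omega)]

section LastZero

variable {n : ℕ} {h : ℤ} {r : Fin n → Bool}

lemma one_le_pathHeight_of_lastZero_lt (hr : r ∈ gdPaths n (h + 1)) {i : ℕ}
    (hi : lastZero r < i) (hin : i ≤ n) : 1 ≤ pathHeight r i := by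
  have := pathHeight_ne_zero_of_lastZero_lt hi hin
  have := (mem_gdPaths.mp hr).2 i hin
  omega

lemma lastZero_lt (hh : 0 ≤ h) (hr : r ∈ gdPaths n (h + 1)) : lastZero r < n := by
  refine lt_of_le_of_ne (lastZero_le r) fun heq => ?_
  have := pathHeight_lastZero r
  rw [heq, (mem_gdPaths.mp hr).1] at this
  omega

lemma apply_lastZero (hh : 0 ≤ h) (hr : r ∈ gdPaths n (h + 1)) :
    r ⟨lastZero r, lastZero_lt hh hr⟩ = true := by
  have hup := one_le_pathHeight_of_lastZero_lt hr (Nat.lt_succ_self _) (lastZero_lt hh hr)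
  rw [pathHeight_succ, pathHeight_lastZero, pathStep, dif_pos (lastZero_lt hh hr)] at hup
  by_contra hdown
  simp [hdown] at hup

lemma pathPrefix_lastZero_mem (hr : r ∈ gdPaths n (h + 1)) :
    pathPrefix r (lastZero r) ∈ gdPaths (lastZero r) 0 := by
  refine mem_gdPaths.mpr ⟨?_, fun i hi => ?_⟩
  · rw [pathHeight_pathPrefix r (lastZero_le r) le_rfl, pathHeight_lastZero]
  · rw [pathHeight_pathPrefix r (lastZero_le r) hi]
    exact (mem_gdPaths.mp hr).2 i (hi.trans (lastZero_le r))

lemma pathSuffix_lastZero_mem (hh : 0 ≤ h) (hr : r ∈ gdPaths n (h + 1)) :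
    pathSuffix r (lastZero r + 1) ∈ gdPaths (n - (lastZero r + 1)) h := by
  have hlt := lastZero_lt hh hr
  have hheight (i : ℕ) : pathHeight r (lastZero r + 1 + i) =
      1 + pathHeight (pathSuffix r (lastZero r + 1)) i := by
    rw [pathHeight_add_pathSuffix, pathHeight_succ, pathHeight_lastZero, pathStep, dif_pos hlt,
      apply_lastZero hh hr]
    simp
  refine mem_gdPaths.mpr ⟨?_, fun i hi => ?_⟩
  · have := hheight (n - (lastZero r + 1))
    rw [show lastZero r + 1 + (n - (lastZero r + 1)) = n by omega, (mem_gdPaths.mp hr).1] at this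
    omega
  · have := one_le_pathHeight_of_lastZero_lt hr (i := lastZero r + 1 + i) (by omega) (by omega)
    linarith [hheight i]

end LastZero

lemma card_gdPaths_succ_s10 (n h : ℕ) :
    (gdPaths n ((h : ℤ) + 1)).card =
      ∑ m ∈ range n, (gdPaths m 0).card * (gdPaths (n - (m + 1)) h).card := by
  have hh : (0 : ℤ) ≤ h := Int.natCast_nonneg h
  simp_rw [← card_product, ← card_sigma]
  refine card_nbij'
    (fun r => ⟨lastZero r, pathPrefix r (lastZero r), pathSuffix r (lastZero r + 1)⟩)
    (fun x => glue x.1 n x.2.1 x.2.2) (fun r hr => ?_) (fun x hx => ?_) (fun r hr => ?_)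
    (fun x hx => ?_)
  · exact mem_sigma.mpr ⟨mem_range.mpr (lastZero_lt hh hr),
      mem_product.mpr ⟨pathPrefix_lastZero_mem hr, pathSuffix_lastZero_mem hh hr⟩⟩
  · simp only [mem_coe, mem_sigma, mem_range, mem_product] at hx
    exact glue_mem_gdPaths hx.1 hx.2.1 hx.2.2
  · exact glue_pathPrefix_pathSuffix r _ (apply_lastZero hh hr)
  · obtain ⟨m, p, q⟩ := x
    simp only [mem_coe, mem_sigma, mem_range, mem_product] at hx
    dsimp only
    rw [lastZero_glue hx.1 hx.2.1 hx.2.2, pathPrefix_glue hx.1, pathSuffix_glue]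

noncomputable def lengthTuples (h n : ℕ) : Finset (Fin (h + 1) → ℕ) :=
  (Fintype.piFinset fun _ : Fin (h + 1) => range (n + 1)) |>.filter (fun f => (∑ i, f i) + h = n)

lemma mem_lengthTuples {h n : ℕ} {f : Fin (h + 1) → ℕ} :
    f ∈ lengthTuples h n ↔ (∑ i, f i) + h = n := by
  simp only [lengthTuples, mem_filter, Fintype.mem_piFinset, mem_range, and_iff_right_iff_imp]
  intro hf i
  have := single_le_sum (fun j _ => Nat.zero_le (f j)) (mem_univ i)
  omega

lemma lengthTuples_zero (n : ℕ) : lengthTuples 0 n = {fun _ => n} := by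
  ext f
  simp [mem_lengthTuples, funext_iff, Fin.forall_fin_one]

lemma sum_prod_lengthTuples_succ {R : Type*} [CommSemiring R] (a : ℕ → R) (h n : ℕ) :
    ∑ f ∈ lengthTuples (h + 1) n, ∏ i, a (f i) =
      ∑ m ∈ range n, a m * ∑ f ∈ lengthTuples h (n - (m + 1)), ∏ i, a (f i) := by
  simp_rw [mul_sum]
  rw [sum_sigma']
  refine sum_nbij' (fun f => ⟨f 0, Fin.tail f⟩) (fun x => Fin.cons x.1 x.2) (fun f hf => ?_)
    (fun x hx => ?_) (fun f _ => Fin.cons_self_tail f) (fun x _ => by simp)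
    (fun f _ => Fin.prod_univ_succ _)
  · rw [mem_lengthTuples, Fin.sum_univ_succ] at hf
    simp only [mem_sigma, mem_range, mem_lengthTuples, Fin.tail]
    omega
  · simp only [mem_sigma, mem_range, mem_lengthTuples] at hx
    rw [mem_lengthTuples, Fin.sum_univ_succ]
    simp only [Fin.cons_zero, Fin.cons_succ]
    omega

/-- The number of generalized Dyck paths from (0,0) to (n,h) equals the number of
(h+1)-tuples of Dyck paths whose lengths sum to n − h. -/
theorem stmt10 (n h : ℕ) :
    (gdPaths n (h : ℤ)).card =
      ∑ f ∈ (Fintype.piFinset fun _ : Fin (h + 1) => Finset.range (n + 1)) |>.filter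
          (fun f => (∑ i, f i) + h = n),
        ∏ i, (gdPaths (f i) 0).card := by
  change (gdPaths n h).card = ∑ f ∈ lengthTuples h n, ∏ i, (gdPaths (f i) 0).card
  induction h generalizing n with
  | zero => simp [lengthTuples_zero]
  | succ h ih =>
    rw [Nat.cast_succ, card_gdPaths_succ_s10, sum_prod_lengthTuples_succ (fun m => (gdPaths m 0).card)]
    simp only [ih]
end
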